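/- arXiv:2112.03331 — 7 statements merged into one kernel-verified Lean document; each statement's English description precedes it below -/
import Mathlib

section
/- Let p₁, p₂, p₃ be any three points in the Euclidean plane EuclideanSpace ℝ (Fin 2). Set a = dist p₂ p₃, b = dist p₁ p₃, c = dist p₁ p₂ and s = (a + b + c)/2. Then the area of the triangle with vertices p₁, p₂, p₃, i.e. (MeasureTheory.volume (convexHull ℝ {p₁, p₂, p₃})).toReal, equals Real.sqrt (s * (s − a) * (s − b) * (s − c)). -/
/-!
The triangle is the image of the unit triangle `{x, y ≥ 0, x + y ≤ 1}`, of area `1/2` by Fubini,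
under the affine map `x ↦ p₁ + L x` with `L eᵢ = pᵢ₊₁ - p₁`; this map scales area by `|det L|`,
so the area is `|det L| / 2`. With `u = p₂ - p₁`, `v = p₃ - p₁` one has
`16 s (s - a) (s - b) (s - c) = 4 b²c² - (b² + c² - a²)²`, and by the law of cosines and
Lagrange's identity `‖u‖²‖v‖² - ⟪u, v⟫² = (det L)²` this is `4 (det L)²`.
-/

open MeasureTheory Set Pointwise

local notation "ℝ²" => EuclideanSpace ℝ (Fin 2)

def unitTriangle : Set (ℝ × ℝ) := {p | 0 ≤ p.1 ∧ 0 ≤ p.2 ∧ p.1 + p.2 ≤ 1}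

theorem measurableSet_unitTriangle : MeasurableSet unitTriangle := by
  unfold unitTriangle; measurability

theorem volume_unitTriangle : volume unitTriangle = ENNReal.ofReal (1 / 2) := by
  have hsection (x : ℝ) :
      volume (Prod.mk x ⁻¹' unitTriangle)
        = (Icc 0 1).indicator (fun x => ENNReal.ofReal (1 - x)) x := by
    by_cases hx : 0 ≤ x
    · have hslice : Prod.mk x ⁻¹' unitTriangle = Icc 0 (1 - x) := by
        ext y; simp [unitTriangle, hx, le_sub_iff_add_le']
      rw [hslice, Real.volume_Icc, sub_zero, indicator_apply]
      split_ifs with h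
      · rfl
      · exact ENNReal.ofReal_eq_zero.2 (by linarith [show 1 < x by simpa [hx] using h])
    · have hslice : Prod.mk x ⁻¹' unitTriangle = ∅ := by
        ext y; simp [unitTriangle, hx]
      rw [hslice, measure_empty, indicator_of_notMem (by simp [hx])]
  rw [Measure.volume_eq_prod, Measure.prod_apply measurableSet_unitTriangle]
  simp only [hsection]
  rw [lintegral_indicator measurableSet_Icc, ← ofReal_integral_eq_lintegral_ofReal]
  · rw [integral_Icc_eq_integral_Ioc, ← intervalIntegral.integral_of_le zero_le_one,
      intervalIntegral.integral_sub intervalIntegrable_const intervalIntegral.intervalIntegrable_id,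
      integral_id]
    norm_num
  · exact (continuous_const.sub continuous_id).integrableOn_Icc
  · exact (ae_restrict_iff' measurableSet_Icc).2 (ae_of_all _ fun x hx => by simp [hx.2])

theorem convexHull_zero_single_single :
    convexHull ℝ ({0, EuclideanSpace.single 0 1, EuclideanSpace.single 1 1} : Set ℝ²)
      = {x : ℝ² | 0 ≤ x 0 ∧ 0 ≤ x 1 ∧ x 0 + x 1 ≤ 1} := by
  apply Subset.antisymm
  · refine convexHull_min ?_ ?_
    · rintro x (rfl | rfl | rfl) <;> simp
    · rintro x ⟨hx0, hx1, hx⟩ y ⟨hy0, hy1, hy⟩ a b ha hb hab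
      simp only [mem_ofPred_eq, PiLp.add_apply, PiLp.smul_apply, smul_eq_mul]
      refine ⟨by positivity, by positivity, by nlinarith⟩
  · rintro x ⟨hx0, hx1, hx⟩
    have hcomb := (convex_convexHull ℝ
        ({0, EuclideanSpace.single 0 1, EuclideanSpace.single 1 1} : Set ℝ²)).sum_mem
      (t := Finset.univ) (w := ![1 - x 0 - x 1, x 0, x 1])
      (z := ![0, EuclideanSpace.single 0 1, EuclideanSpace.single 1 1])
      (fun i _ => by fin_cases i <;> simp <;> linarith) (by simp [Fin.sum_univ_three]; ring)
      (fun i _ => subset_convexHull ℝ _ (by fin_cases i <;> simp))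
    convert hcomb
    ext i; fin_cases i <;> simp [Fin.sum_univ_three]

theorem volume_convexHull_zero_single_single :
    volume (convexHull ℝ ({0, EuclideanSpace.single 0 1, EuclideanSpace.single 1 1} : Set ℝ²))
      = ENNReal.ofReal (1 / 2) := by
  have hcoords : MeasurePreserving (fun x : ℝ² => (x 0, x 1)) :=
    (volume_preserving_finTwoArrow ℝ).comp (PiLp.volume_preserving_ofLp (Fin 2))
  rw [convexHull_zero_single_single, ← volume_unitTriangle]
  exact hcoords.measure_preimage measurableSet_unitTriangle.nullMeasurableSet

theorem volume_convexHull_triangle (p₁ p₂ p₃ : ℝ²) :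
    volume (convexHull ℝ {p₁, p₂, p₃})
      = ENNReal.ofReal (|(p₂ - p₁) 0 * (p₃ - p₁) 1 - (p₂ - p₁) 1 * (p₃ - p₁) 0| / 2) := by
  set u := p₂ - p₁
  set v := p₃ - p₁
  set L : ℝ² →ₗ[ℝ] ℝ² := Matrix.toLpLin 2 2 !![u 0, v 0; u 1, v 1]
  have hLu : L (EuclideanSpace.single 0 1) = u := by
    ext i; fin_cases i <;> simp [L, Matrix.ofLp_toLpLin, Matrix.mulVec, dotProduct]
  have hLv : L (EuclideanSpace.single 1 1) = v := by
    ext i; fin_cases i <;> simp [L, Matrix.ofLp_toLpLin, Matrix.mulVec, dotProduct]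
  have hvertices : ({p₁, p₂, p₃} : Set ℝ²)
      = p₁ +ᵥ L '' {0, EuclideanSpace.single 0 1, EuclideanSpace.single 1 1} := by
    simp only [image_insert_eq, image_singleton, map_zero, hLu, hLv, ← image_vadd]
    simp [u, v]
  have hdet : LinearMap.det L = u 0 * v 1 - u 1 * v 0 := by
    simp only [L]
    rw [Matrix.toLpLin_eq_toLin, LinearMap.det_toLin, Matrix.det_fin_two_of]; ring
  rw [hvertices, convexHull_vadd, measure_vadd, ← LinearMap.image_convexHull,
    Measure.addHaar_image_linearMap, volume_convexHull_zero_single_single, hdet,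
    ← ENNReal.ofReal_mul (abs_nonneg _), mul_one_div]

theorem norm_sq_mul_norm_sq_sub_inner_sq (u v : ℝ²) :
    ‖u‖ ^ 2 * ‖v‖ ^ 2 - inner ℝ u v ^ 2 = (u 0 * v 1 - u 1 * v 0) ^ 2 := by
  simp only [EuclideanSpace.norm_sq_eq, EuclideanSpace.inner_eq_star_dotProduct, dotProduct,
    Fin.sum_univ_two, Real.norm_eq_abs, sq_abs, Pi.star_apply, star_trivial]
  ring

/-- Heron's formula, as stated by Clavius in Book IV, Chapter 2 of the
`Geometria Practica`. -/
theorem heron_formula (p₁ p₂ p₃ : EuclideanSpace ℝ (Fin 2))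
    (a b c s : ℝ)
    (ha : a = dist p₂ p₃) (hb : b = dist p₁ p₃) (hc : c = dist p₁ p₂)
    (hs : s = (a + b + c) / 2) :
    (MeasureTheory.volume (convexHull ℝ ({p₁, p₂, p₃} : Set (EuclideanSpace ℝ (Fin 2))))).toReal
      = Real.sqrt (s * (s - a) * (s - b) * (s - c)) := by
  set u := p₂ - p₁
  set v := p₃ - p₁
  have hc' : c = ‖u‖ := by rw [hc, dist_comm, dist_eq_norm]
  have hb' : b = ‖v‖ := by rw [hb, dist_comm, dist_eq_norm]
  have ha' : a = ‖u - v‖ := by rw [ha, dist_eq_norm, sub_sub_sub_cancel_right]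
  have hlaw : a ^ 2 = b ^ 2 + c ^ 2 - 2 * inner ℝ u v := by
    rw [ha', hb', hc', norm_sub_sq_real]; ring
  have hlagrange : c ^ 2 * b ^ 2 - inner ℝ u v ^ 2 = (u 0 * v 1 - u 1 * v 0) ^ 2 := by
    rw [hb', hc', norm_sq_mul_norm_sq_sub_inner_sq]
  have hprod : s * (s - a) * (s - b) * (s - c) = ((u 0 * v 1 - u 1 * v 0) / 2) ^ 2 := by
    rw [hs]
    linear_combination
      (1 / 4) * hlagrange + ((b ^ 2 + c ^ 2 - a ^ 2 + 2 * inner ℝ u v) / 16) * hlaw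
  rw [volume_convexHull_triangle, ENNReal.toReal_ofReal (by positivity), hprod,
    Real.sqrt_sq_eq_abs, abs_div, abs_two]
end

section
/- For every natural number n with 3 ≤ n, one has Real.pi − (n : ℝ) * Real.sin (Real.pi / n) < (Real.pi − ((n : ℝ)/2) * Real.sin (2 * Real.pi / n)) / 2. -/
/-!
With `θ = π / n`, the double-angle formula turns the claim into `n θ < n sin θ (2 - cos θ)`.
The function `sin x (2 - cos x) - x` vanishes at `0` and has derivative `2 cos x (1 - cos x)`,
which is positive on `(0, π / 2)`, so `θ < sin θ (2 - cos θ)` for `0 < θ ≤ π / 2`.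
-/

open Real Set

lemma hasDerivAt_sin_mul_two_sub_cos_sub_id (x : ℝ) :
    HasDerivAt (fun x => sin x * (2 - cos x) - x) (2 * cos x * (1 - cos x)) x := by
  have h : HasDerivAt (fun x => sin x * (2 - cos x) - x)
      (cos x * (2 - cos x) + sin x * (0 - -sin x) - 1) x :=
    ((hasDerivAt_sin x).mul ((hasDerivAt_const x 2).sub (hasDerivAt_cos x))).sub (hasDerivAt_id x)
  convert h using 1
  linear_combination -sin_sq_add_cos_sq x

lemma strictMonoOn_sin_mul_two_sub_cos_sub_id :
    StrictMonoOn (fun x => sin x * (2 - cos x) - x) (Icc 0 (π / 2)) := by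
  refine strictMonoOn_of_hasDerivWithinAt_pos (convex_Icc _ _) (by fun_prop)
    (fun x _ => (hasDerivAt_sin_mul_two_sub_cos_sub_id x).hasDerivWithinAt) ?_
  rw [interior_Icc]
  rintro x ⟨hx0, hx⟩
  have hcos_pos : 0 < cos x := cos_pos_of_mem_Ioo ⟨by linarith, hx⟩
  have hcos_lt_one : cos x < 1 := by
    simpa using cos_lt_cos_of_nonneg_of_le_pi le_rfl (by linarith [pi_pos]) hx0
  have : 0 < 1 - cos x := by linarith
  positivity

lemma lt_sin_mul_two_sub_cos {θ : ℝ} (h0 : 0 < θ) (hθ : θ ≤ π / 2) :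
    θ < sin θ * (2 - cos θ) := by
  have h := strictMonoOn_sin_mul_two_sub_cos_sub_id
    (left_mem_Icc.2 (by positivity)) ⟨h0.le, hθ⟩ h0
  simp only [sin_zero, cos_zero, zero_mul, sub_zero] at h
  linarith

/-- Passing from the inscribed regular n-gon to the inscribed regular 2n-gon removes
more than half of the area remaining between the polygon and the circle. -/
theorem inscribed_doubling_step (n : ℕ) (hn : 3 ≤ n) :
    Real.pi - (n : ℝ) * Real.sin (Real.pi / n) <
      (Real.pi - ((n : ℝ) / 2) * Real.sin (2 * Real.pi / n)) / 2 := by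
  have hn' : (3 : ℝ) ≤ n := by exact_mod_cast hn
  have hn_pos : (0 : ℝ) < n := by linarith
  have hθ_pos : 0 < π / n := by positivity
  have hθ_le : π / n ≤ π / 2 := div_le_div_of_nonneg_left pi_pos.le two_pos (by linarith)
  have hnθ : n * (π / n) = π := mul_div_cancel₀ π hn_pos.ne'
  have hsin_two : sin (2 * π / n) = 2 * sin (π / n) * cos (π / n) := by
    rw [mul_div_assoc, sin_two_mul]
  have hkey := mul_lt_mul_of_pos_left (lt_sin_mul_two_sub_cos hθ_pos hθ_le) hn_pos
  rw [hsin_two]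
  linarith
end

section
/- For every natural number n with 3 ≤ n, one has (2 * n : ℝ) * Real.tan (Real.pi / (2 * n)) − Real.pi < ((n : ℝ) * Real.tan (Real.pi / n) − Real.pi) / 2. -/
/-!
With `θ = π / (2n) ∈ (0, π/4)` the claim is `4 tan θ < 2θ + tan 2θ`, multiplied by `n`.
Writing `t = tan θ ∈ (0, 1)`, so that `θ = arctan t` and `tan 2θ = 2t / (1 - t²)`, this follows
from the Taylor bound `t - t³/3 < arctan t`, whose error term has derivative `t⁴ / (1 + t²) > 0`.
-/

open Real Set

theorem Real.sub_pow_three_div_three_lt_arctan {x : ℝ} (hx : 0 < x) :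
    x - x ^ 3 / 3 < arctan x := by
  let g : ℝ → ℝ := fun y ↦ arctan y - y + y ^ 3 / 3
  have hg (y : ℝ) : HasDerivAt g (y ^ 4 / (1 + y ^ 2)) y := by
    refine (((hasDerivAt_arctan y).sub (hasDerivAt_id y)).add
      ((hasDerivAt_pow 3 y).div_const 3)).congr_deriv ?_
    field_simp
    ring
  have hmono : StrictMonoOn g (Ici 0) := by
    refine strictMonoOn_of_deriv_pos (convex_Ici 0)
      (fun y _ ↦ (hg y).continuousAt.continuousWithinAt) fun y hy ↦ ?_
    rw [interior_Ici] at hy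
    rw [(hg y).deriv]
    exact div_pos (pow_pos hy 4) (by positivity)
  have := hmono self_mem_Ici hx.le hx
  simp only [g, arctan_zero] at this
  linarith

theorem Real.four_mul_tan_lt_two_mul_add_tan_two_mul {θ : ℝ} (h₀ : 0 < θ) (h₁ : θ < π / 4) :
    4 * tan θ < 2 * θ + tan (2 * θ) := by
  set t := tan θ
  have ht₀ : 0 < t := tan_pos_of_pos_of_lt_pi_div_two h₀ (by linarith)
  have ht₁ : t < 1 := by
    rw [← tan_pi_div_four]
    exact tan_lt_tan_of_lt_of_lt_pi_div_two (by linarith) (by linarith) h₁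
  have harctan : t - t ^ 3 / 3 < θ := calc
    _ < arctan t := sub_pow_three_div_three_lt_arctan ht₀
    _ = θ := arctan_tan (by linarith) (by linarith)
  have hden : 0 < 1 - t ^ 2 := by nlinarith
  have htan_two_mul : 2 * t + 2 * t ^ 3 / 3 < 2 * t / (1 - t ^ 2) := by
    rw [lt_div_iff₀ hden]
    nlinarith [pow_pos ht₀ 3, pow_pos ht₀ 5]
  rw [tan_two_mul]
  linarith

/-- Passing from the circumscribed regular n-gon to the circumscribed regular 2n-gon
removes more than half of the area remaining between the polygon and the circle. -/
theorem circumscribed_doubling_step (n : ℕ) (hn : 3 ≤ n) :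
    (2 * n : ℝ) * Real.tan (Real.pi / (2 * n)) - Real.pi <
      ((n : ℝ) * Real.tan (Real.pi / n) - Real.pi) / 2 := by
  have hn₃ : (3 : ℝ) ≤ n := by exact_mod_cast hn
  have hn₀ : (0 : ℝ) < n := by linarith
  set θ := π / (2 * n) with hθ
  have hπ : π = 2 * n * θ := by rw [hθ]; field_simp
  have h2θ : π / n = 2 * θ := by rw [hπ]; field_simp
  have hθ₁ : θ < π / 4 := div_lt_div_of_pos_left pi_pos (by norm_num) (by linarith)
  have key := four_mul_tan_lt_two_mul_add_tan_two_mul (by positivity) hθ₁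
  rw [h2θ, hπ]
  nlinarith [mul_lt_mul_of_pos_left key hn₀]
end

section
/- Let a, b, x, y be positive real numbers with x^2 = a * y and y^2 = x * b (that is, a : x :: x : y :: y : b, so x and y are two mean proportionals in continued proportion between a and b). Then x^3 = a^2 * b and y^3 = a * b^2. In particular, if a = 2 * b then y^3 = 2 * b^3, so the cube with edge y has double the volume of the cube with edge b. -/
/-- Hippocrates of Chios's reduction of the duplication of the cube: if x and y are two
mean proportionals in continued proportion between a and b, then x³ = a²b and y³ = ab²;
in particular if a = 2b then y³ = 2b³. -/
theorem two_mean_proportionals_cube (a b x y : ℝ)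
    (ha : 0 < a) (hb : 0 < b) (hx : 0 < x) (hy : 0 < y)
    (h1 : x^2 = a * y) (h2 : y^2 = x * b) :
    x^3 = a^2 * b ∧ y^3 = a * b^2 ∧ (a = 2 * b → y^3 = 2 * b^3) := by
  have hx3 : x^3 = a^2 * b := by
    have h : x^4 = a^2 * x * b := by
      calc x^4 = (a*y)^2 := by rw [← h1]; ring
        _ = a^2 * (x*b) := by rw [← h2]; ring
        _ = a^2 * x * b := by ring
    have := mul_right_cancel₀ (ne_of_gt hx) (by linarith [h] : x^3 * x = a^2 * b * x)
    linarith
  have hy3 : y^3 = a * b^2 := by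
    have h : y^4 = a * y * b^2 := by
      calc y^4 = (x*b)^2 := by rw [← h2]; ring
        _ = (a*y) * b^2 := by rw [← h1]; ring
        _ = a * y * b^2 := by ring
    have := mul_left_cancel₀ (ne_of_gt hy) (by linarith [h] : y * y^3 = y * (a * b^2))
    linarith
  exact ⟨hx3, hy3, fun h => by rw [hy3, h]; ring⟩
end

section
/- Let E, G, B, O, F be points of the Euclidean plane EuclideanSpace ℝ (Fin 2) with B ≠ O, such that B lies between G and O (Wbtw ℝ G B O) and O lies between B and F (Wbtw ℝ B O F), and suppose dist E B = dist E O. Then dist G B = dist O F if and only if dist E G = dist E F. -/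
/-!
The foot of the perpendicular from `E` to the line `BO` is the midpoint `M` of the chord `BO`,
so by Pythagoras `EX² = EM² + MX²` for every `X` on that line, and `EG = EF ↔ MG = MF`.
Since `G, B, M, O, F` lie on the line in this order and `MB = MO`, we have `MG = GB + MB` and
`MF = MO + OF`, hence `MG = MF ↔ GB = OF`.
-/

open EuclideanGeometry

section

variable {V P : Type*} [NormedAddCommGroup V] [InnerProductSpace ℝ V] [MetricSpace P]
  [NormedAddTorsor V P]

theorem inner_vsub_midpoint_eq_zero_of_mem_line {E B O X : P} (h : dist E B = dist E O)
    (hX : X ∈ line[ℝ, B, O]) : inner ℝ (E -ᵥ midpoint ℝ B O) (X -ᵥ midpoint ℝ B O) = 0 := by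
  have hperp : inner ℝ (E -ᵥ midpoint ℝ B O) (O -ᵥ B) = 0 :=
    inner_vsub_vsub_of_dist_eq_of_dist_eq (dist_left_midpoint_eq_dist_right_midpoint B O)
      (by rwa [dist_comm B, dist_comm O])
  have hdir : X -ᵥ midpoint ℝ B O ∈ vectorSpan ℝ ({B, O} : Set P) := by
    rw [← direction_affineSpan]
    exact AffineSubspace.vsub_mem_direction hX (wbtw_midpoint ℝ B O).mem_affineSpan
  obtain ⟨r, hr⟩ := mem_vectorSpan_pair_rev.mp hdir
  rw [← hr, real_inner_smul_right, hperp, mul_zero]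

theorem dist_sq_eq_dist_midpoint_sq_add_of_mem_line {E B O X : P} (h : dist E B = dist E O)
    (hX : X ∈ line[ℝ, B, O]) :
    dist E X ^ 2 = dist E (midpoint ℝ B O) ^ 2 + dist (midpoint ℝ B O) X ^ 2 := by
  rw [dist_eq_norm_vsub V, dist_eq_norm_vsub V, dist_eq_norm_vsub' V,
    ← vsub_sub_vsub_cancel_right E X (midpoint ℝ B O)]
  simpa only [sq] using
    norm_sub_sq_eq_norm_sq_add_norm_sq_real (inner_vsub_midpoint_eq_zero_of_mem_line h hX)

theorem dist_eq_dist_iff_dist_midpoint_eq_of_mem_line {E B O X Y : P} (h : dist E B = dist E O)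
    (hX : X ∈ line[ℝ, B, O]) (hY : Y ∈ line[ℝ, B, O]) :
    dist E X = dist E Y ↔ dist (midpoint ℝ B O) X = dist (midpoint ℝ B O) Y := by
  rw [← sq_eq_sq₀ dist_nonneg dist_nonneg, ← sq_eq_sq₀ dist_nonneg dist_nonneg,
    dist_sq_eq_dist_midpoint_sq_add_of_mem_line h hX,
    dist_sq_eq_dist_midpoint_sq_add_of_mem_line h hY, add_right_inj]

end

/-- The equivalence between the neusis condition BG = OF of Philo's method and the
condition EF = EG of Heron's method for two mean proportionals. -/
theorem philo_heron_equiv (E G B O F : EuclideanSpace ℝ (Fin 2)) (hBO : B ≠ O)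
    (h1 : Wbtw ℝ G B O) (h2 : Wbtw ℝ B O F) (h3 : dist E B = dist E O) :
    dist G B = dist O F ↔ dist E G = dist E F := by
  have hG : G ∈ line[ℝ, B, O] :=
    h1.collinear.mem_affineSpan_of_mem_of_ne (by simp) (by simp) (by simp) hBO
  have hF : F ∈ line[ℝ, B, O] :=
    h2.collinear.mem_affineSpan_of_mem_of_ne (by simp) (by simp) (by simp) hBO
  have hMG : dist (midpoint ℝ B O) G = dist G B + dist B (midpoint ℝ B O) := by
    rw [dist_comm (midpoint ℝ B O), (h1.trans_right_left (wbtw_midpoint ℝ B O)).dist_add_dist]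
  have hMF : dist (midpoint ℝ B O) F = dist (midpoint ℝ B O) O + dist O F :=
    (h2.trans_left_right (wbtw_midpoint ℝ B O)).dist_add_dist.symm
  rw [dist_eq_dist_iff_dist_midpoint_eq_of_mem_line h3 hG hF, hMG, hMF,
    dist_left_midpoint_eq_dist_right_midpoint, dist_comm O (midpoint ℝ B O),
    add_comm (dist (midpoint ℝ B O) O), add_left_inj]
end

section
/- Let θ be a real number with 0 < θ < π/2. In ℝ × ℝ consider the points A = (−1, 0), C = (1, 0), F = (Real.sin θ, −Real.cos θ) and G = (−Real.sin θ, −Real.cos θ) on the unit circle, the foot K = (Real.sin θ, 0) of the perpendicular from F to the diameter AC, and a point H = (Real.sin θ, h) on the vertical line through K which is collinear with C and G. Then dist A K * dist K C = (dist K F)^2 and dist K F * dist K H = (dist K C)^2; that is, KF and KC are two mean proportionals in continued proportion between AK and KH. -/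
/-- The "Lemma of Diocles": in the unit circle with perpendicular diameters, KF and KC
are two mean proportionals in continued proportion between AK and KH. -/
theorem lemma_of_diocles (θ h : ℝ) (hθ0 : 0 < θ) (hθ1 : θ < Real.pi / 2)
    (A C F G K H : ℝ × ℝ)
    (hA : A = (-1, 0)) (hC : C = (1, 0))
    (hF : F = (Real.sin θ, -Real.cos θ)) (hG : G = (-Real.sin θ, -Real.cos θ))
    (hK : K = (Real.sin θ, 0)) (hH : H = (Real.sin θ, h))
    (hcol : Collinear ℝ ({C, G, H} : Set (ℝ × ℝ))) :
    dist A K * dist K C = (dist K F)^2 ∧ dist K F * dist K H = (dist K C)^2 := by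
  set s := Real.sin θ with hs
  set c := Real.cos θ with hc
  have hpi := Real.pi_pos
  have hs0 : 0 < s := Real.sin_pos_of_pos_of_lt_pi hθ0 (by linarith)
  have hc0 : 0 < c := Real.cos_pos_of_mem_Ioo ⟨by linarith, hθ1⟩
  have hsc : s ^ 2 + c ^ 2 = 1 := Real.sin_sq_add_cos_sq θ
  have hs1 : s < 1 := by nlinarith
  subst hA hC hF hG hK hH
  -- extract the collinearity equation
  have key : (s + 1) * h = c * (s - 1) := by
    rw [collinear_iff_exists_forall_eq_smul_vadd] at hcol
    obtain ⟨p₀, v, hv⟩ := hcol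
    obtain ⟨r1, hr1⟩ := hv _ (Set.mem_insert _ _)
    obtain ⟨r2, hr2⟩ := hv _ (Set.mem_insert_of_mem _ (Set.mem_insert _ _))
    obtain ⟨r3, hr3⟩ := hv _ (Set.mem_insert_of_mem _
      (Set.mem_insert_of_mem _ (Set.mem_singleton _)))
    rw [Prod.ext_iff] at hr1 hr2 hr3
    obtain ⟨a1, b1⟩ := hr1
    obtain ⟨a2, b2⟩ := hr2
    obtain ⟨a3, b3⟩ := hr3
    simp only [Prod.fst_add, Prod.snd_add, Prod.smul_fst, Prod.smul_snd,
      smul_eq_mul, vadd_eq_add] at a1 b1 a2 b2 a3 b3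
    have e1 : -s - 1 = (r2 - r1) * v.1 := by rw [a1] at *; rw [a2]; ring
    have e2 : -c - 0 = (r2 - r1) * v.2 := by rw [b1] at *; rw [b2]; ring
    have e3 : s - 1 = (r3 - r1) * v.1 := by rw [a1] at *; rw [a3]; ring
    have e4 : h - 0 = (r3 - r1) * v.2 := by rw [b1] at *; rw [b3]; ring
    have m1 : (-s - 1) * (h - 0) = (-c - 0) * (s - 1) := by
      rw [e1, e2, e3, e4]; ring
    nlinarith [m1]
  have hhval : h = c * (s - 1) / (s + 1) := by
    field_simp
    linarith [key]
  have hh0 : h ≤ 0 := by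
    rw [hhval]
    apply div_nonpos_of_nonpos_of_nonneg
    · nlinarith
    · linarith
  have dAK : dist ((-1 : ℝ), (0 : ℝ)) (s, (0 : ℝ)) = s + 1 := by
    rw [Prod.dist_eq]
    simp only [Real.dist_eq]
    rw [show (-1 : ℝ) - s = -(s + 1) by ring, abs_neg,
      abs_of_nonneg (by linarith : (0:ℝ) ≤ s + 1), sub_self, abs_zero]
    exact max_eq_left (by linarith)
  have dKC : dist ((s : ℝ), (0 : ℝ)) ((1 : ℝ), (0 : ℝ)) = 1 - s := by
    rw [Prod.dist_eq]
    simp only [Real.dist_eq]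
    rw [show (s : ℝ) - 1 = -(1 - s) by ring, abs_neg,
      abs_of_nonneg (by linarith : (0:ℝ) ≤ 1 - s), sub_self, abs_zero]
    exact max_eq_left (by linarith)
  have dKF : dist ((s : ℝ), (0 : ℝ)) (s, -c) = c := by
    rw [Prod.dist_eq]
    simp only [Real.dist_eq]
    rw [sub_self, abs_zero, show (0 : ℝ) - -c = c by ring,
      abs_of_nonneg (by linarith : (0:ℝ) ≤ c)]
    exact max_eq_right (by linarith)
  have dKH : dist ((s : ℝ), (0 : ℝ)) (s, h) = -h := by
    rw [Prod.dist_eq]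
    simp only [Real.dist_eq]
    rw [sub_self, abs_zero, zero_sub, abs_neg, abs_of_nonpos hh0]
    exact max_eq_right (by linarith)
  rw [dAK, dKC, dKF, dKH]
  constructor
  · nlinarith
  · rw [hhval]
    have hne : s + 1 ≠ 0 := by linarith
    field_simp
    nlinarith
end

section
/- Let V, D be points of the Euclidean plane EuclideanSpace ℝ (Fin 2) and let u, v be linearly independent vectors, so that ℓ₁ = {V + t • u : t ∈ ℝ} and ℓ₂ = {V + t • v : t ∈ ℝ} are two distinct lines through V. Suppose D lies on neither ℓ₁ nor ℓ₂, and let k > 0. Then there exist real numbers t, s such that, writing X = V + t • u and Y = V + s • v, the points D, X, Y are collinear (Collinear ℝ {D, X, Y}) and dist X Y = k. -/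
/-!
Write `D = V + a • u + b • v`; then `a ≠ 0` since `D` is off the side `V + ℝ • v`. For `r ≥ 0` put
`X r = V - (r * a) • u` and `Y r = V + (r / (1 + r) * b) • v`. Then `X r - Y r = -r • (D - Y r)`, so
`D, X r, Y r` are collinear, and `dist (X r) (Y r)` is continuous in `r`, vanishes at `r = 0` and is at
least `r * |a| * ‖u‖ - |b| * ‖v‖`, so it takes every value `k ≥ 0`.
-/

open Filter Set

section Neusis

variable {E : Type*} [NormedAddCommGroup E] [NormedSpace ℝ E]

theorem collinear_neusis_secant (V u v : E) (a b : ℝ) {r : ℝ} (hr : 1 + r ≠ 0) :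
    Collinear ℝ {V + a • u + b • v, V + (-(r * a)) • u, V + (r / (1 + r) * b) • v} := by
  rw [Set.insert_comm]
  apply collinear_insert_of_mem_affineSpan_pair
  convert AffineMap.lineMap_mem_affineSpan_pair (1 + r) (V + a • u + b • v)
    (V + (r / (1 + r) * b) • v) using 1
  rw [AffineMap.lineMap_apply_module']
  match_scalars <;> field_simp <;> ring

theorem sub_le_dist_neusis_secant (V u v : E) (a b : ℝ) {r : ℝ} (hr : 0 ≤ r) :
    r * (|a| * ‖u‖) - |b| * ‖v‖ ≤ dist (V + (-(r * a)) • u) (V + (r / (1 + r) * b) • v) := by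
  have hfrac : |r / (1 + r)| ≤ 1 := by
    rw [abs_of_nonneg (by positivity), div_le_one (by positivity)]
    linarith
  calc r * (|a| * ‖u‖) - |b| * ‖v‖
      ≤ ‖(-(r * a)) • u‖ - ‖(r / (1 + r) * b) • v‖ := by
        rw [norm_smul, norm_smul, norm_neg, Real.norm_eq_abs, Real.norm_eq_abs, abs_mul, abs_mul,
          abs_of_nonneg hr]
        have := mul_le_mul_of_nonneg_right hfrac (mul_nonneg (abs_nonneg b) (norm_nonneg v))
        linarith
    _ ≤ _ := by
        rw [dist_add_left, dist_eq_norm]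
        exact norm_sub_norm_le _ _

theorem continuousOn_dist_neusis_secant (V u v : E) (a b : ℝ) :
    ContinuousOn (fun r : ℝ ↦ dist (V + (-(r * a)) • u) (V + (r / (1 + r) * b) • v)) (Ici 0) := by
  have : ∀ r ∈ Ici (0 : ℝ), 1 + r ≠ 0 := fun r hr ↦ by simp at hr; positivity
  fun_prop (disch := assumption)

theorem exists_collinear_dist_eq (V u v : E) {a : ℝ} (b : ℝ) (ha : a ≠ 0) (hu : u ≠ 0)
    {k : ℝ} (hk : 0 ≤ k) :
    ∃ t s : ℝ, Collinear ℝ {V + a • u + b • v, V + t • u, V + s • v} ∧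
      dist (V + t • u) (V + s • v) = k := by
  set g := fun r : ℝ ↦ dist (V + (-(r * a)) • u) (V + (r / (1 + r) * b) • v)
  have hg_top : Tendsto g atTop atTop := by
    have hc : 0 < |a| * ‖u‖ := by positivity
    refine tendsto_atTop_mono' _ ?_
      (tendsto_atTop_add_const_right _ (-(|b| * ‖v‖)) (tendsto_id.atTop_mul_const hc))
    filter_upwards [eventually_ge_atTop 0] with r hr
    simpa only [id, ← sub_eq_add_neg] using sub_le_dist_neusis_secant V u v a b hr
  have hk' : k ∈ Ici (g 0) := by simpa [g] using hk
  obtain ⟨r, hr, rfl⟩ :=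
    intermediate_value_Ici (continuousOn_dist_neusis_secant V u v a b) hg_top hk'
  exact ⟨_, _, collinear_neusis_secant V u v a b (by simp at hr; positivity), rfl⟩

end Neusis

theorem exists_smul_add_smul_eq {K M : Type*} [Field K] [AddCommGroup M] [Module K M]
    (h2 : Module.finrank K M = 2) {u v : M} (huv : LinearIndependent K ![u, v]) (w : M) :
    ∃ a b : K, a • u + b • v = w := by
  have : FiniteDimensional K M := Module.finite_of_finrank_eq_succ h2
  have hspan := huv.span_eq_top_of_card_eq_finrank (by simp [h2])
  rw [Matrix.range_cons, Matrix.range_cons, Matrix.range_empty, Set.union_empty] at hspan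
  exact Submodule.mem_span_pair.mp (hspan ▸ Submodule.mem_top)

theorem nicomedes_neusis_general (V D : EuclideanSpace ℝ (Fin 2))
    (u v : EuclideanSpace ℝ (Fin 2)) (huv : LinearIndependent ℝ ![u, v])
    (hD2 : ∀ t : ℝ, D ≠ V + t • v)
    (k : ℝ) (hk : 0 < k) :
    ∃ t s : ℝ,
      Collinear ℝ ({D, V + t • u, V + s • v} : Set (EuclideanSpace ℝ (Fin 2))) ∧
      dist (V + t • u) (V + s • v) = k := by
  obtain ⟨a, b, hab⟩ := exists_smul_add_smul_eq finrank_euclideanSpace_fin huv (D - V)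
  have hD : D = V + a • u + b • v := by rw [add_assoc, hab, add_sub_cancel]
  have ha : a ≠ 0 := by
    rintro rfl
    exact hD2 b (by rw [hD, zero_smul, add_zero])
  rw [hD]
  exact exists_collinear_dist_eq V u v b ha (huv.ne_zero 0) hk.le

/-- The problem of Nicomedes: given an angle at V with sides in the directions u, v and
a point D lying on neither side, there is a line through D cutting the two sides in
points X, Y with XY equal to a prescribed length k. -/
theorem nicomedes_neusis (V D : EuclideanSpace ℝ (Fin 2))
    (u v : EuclideanSpace ℝ (Fin 2)) (huv : LinearIndependent ℝ ![u, v])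
    (hD1 : ∀ t : ℝ, D ≠ V + t • u) (hD2 : ∀ t : ℝ, D ≠ V + t • v)
    (k : ℝ) (hk : 0 < k) :
    ∃ t s : ℝ,
      Collinear ℝ ({D, V + t • u, V + s • v} : Set (EuclideanSpace ℝ (Fin 2))) ∧
      dist (V + t • u) (V + s • v) = k :=
  nicomedes_neusis_general V D u v huv hD2 k hk
end
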